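/- arXiv:2207.08347 — 3 statements merged into one kernel-verified Lean document; each statement's English description precedes it below -/
import Mathlib

section
/- Let d ∈ ℕ and let p be a real number with 1 < p ≤ 2. Then the function r(v) := ‖v‖_p²/(2(p−1)) on ℝ^d is 1-strongly convex with respect to the ℓ_p norm: for all x, y ∈ ℝ^d and all t ∈ [0, 1], r(tx + (1−t)y) ≤ t·r(x) + (1−t)·r(y) − (t(1−t)/2)·‖x − y‖_p². -/
/-!
Following Ball, Carlen and Lieb, it suffices to prove the midpoint inequality
`‖(a + b)/2‖² + (p - 1) ‖(a - b)/2‖² ≤ (‖a‖² + ‖b‖²)/2` for the `ℓ_p` norm, because a continuous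
midpoint convex function of one real variable is convex (approximate by dyadic rationals).
With `m, e = (a ± b)/2`, the reverse Minkowski inequality in `ℓ_{p/2}` bounds the left side by the
`ℓ_{p/2}` norm of `(m_i² + (p - 1) e_i²)_i`; the two-point inequality
`(a² + (p - 1) b²)^{p/2} ≤ (|a + b|^p + |a - b|^p)/2` and the convexity of `s ↦ s^{2/p}` finish.
By Bernoulli's inequality the two-point inequality reduces to
`2 + p(p - 1) t² ≤ (1 + t)^p + (1 - t)^p` on `[-1, 1]`, where the difference of the two sides is an
even convex function vanishing at `0`.
-/

open Set

noncomputable section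

/-- `ℝ^d` with the Euclidean structure. -/
abbrev Euc (d : ℕ) := EuclideanSpace ℝ (Fin d)

/-- The `ℓ_p` norm on `ℝ^d`. -/
def lpnorm (d : ℕ) (p : ℝ) (v : Euc d) : ℝ :=
  (∑ i, |v i| ^ p) ^ (1 / p)

open Real Filter Topology

section TwoPoint

variable {p : ℝ}

lemma convexOn_one_add_rpow_add_one_sub_rpow_sub (hp1 : 1 ≤ p) (hp2 : p ≤ 2) :
    ConvexOn ℝ (Icc (-1) 1) fun t : ℝ => (1 + t) ^ p + (1 - t) ^ p - p * (p - 1) * t ^ 2 := by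
  refine convexOn_of_hasDerivWithinAt2_nonneg (convex_Icc _ _)
    (f' := fun t => p * (1 + t) ^ (p - 1) - p * (1 - t) ^ (p - 1) - 2 * (p * (p - 1)) * t)
    (f'' := fun t => p * (p - 1) * ((1 + t) ^ (p - 2) + (1 - t) ^ (p - 2) - 2)) ?_ ?_ ?_ ?_
  · refine Continuous.continuousOn ?_
    have hp : 0 ≤ p := by linarith
    fun_prop (disch := exact fun _ => Or.inr hp)
  all_goals rw [interior_Icc]; rintro t ⟨ht1, ht2⟩
  · refine HasDerivAt.hasDerivWithinAt ?_
    have h1 := ((hasDerivAt_id t).const_add 1).rpow_const (p := p) (Or.inr hp1)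
    have h2 := ((hasDerivAt_id t).const_sub 1).rpow_const (p := p) (Or.inr hp1)
    exact ((h1.add h2).sub (((hasDerivAt_id t).pow 2).const_mul (p * (p - 1)))).congr_deriv
      (by simp only [id]; ring)
  · refine HasDerivAt.hasDerivWithinAt ?_
    have h1 := ((hasDerivAt_id t).const_add 1).rpow_const (p := p - 1) (Or.inl (by simp; linarith))
    have h2 := ((hasDerivAt_id t).const_sub 1).rpow_const (p := p - 1) (Or.inl (by simp; linarith))
    exact ((h1.const_mul p).sub (h2.const_mul p)).sub
      ((hasDerivAt_id t).const_mul (2 * (p * (p - 1)))) |>.congr_deriv (by simp only [id]; ring_nf)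
  · have hx : 0 < (1 + t) ^ (p - 2) := rpow_pos_of_pos (by linarith) _
    have hy : 0 < (1 - t) ^ (p - 2) := rpow_pos_of_pos (by linarith) _
    have hprod : 1 ≤ (1 + t) ^ (p - 2) * (1 - t) ^ (p - 2) := by
      rw [← mul_rpow (by linarith) (by linarith)]
      exact one_le_rpow_of_pos_of_le_one_of_nonpos (by nlinarith) (by nlinarith [sq_nonneg t])
        (by linarith)
    have hsum : 2 ≤ (1 + t) ^ (p - 2) + (1 - t) ^ (p - 2) := by
      nlinarith [sq_nonneg ((1 + t) ^ (p - 2) - (1 - t) ^ (p - 2))]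
    have hpp : 0 ≤ p * (p - 1) := by nlinarith
    exact mul_nonneg hpp (by linarith)

lemma two_add_le_one_add_rpow_add_one_sub_rpow (hp1 : 1 ≤ p) (hp2 : p ≤ 2) {t : ℝ}
    (ht : t ∈ Icc (-1) 1) : 2 + p * (p - 1) * t ^ 2 ≤ (1 + t) ^ p + (1 - t) ^ p := by
  have hneg : -t ∈ Icc (-1 : ℝ) 1 := ⟨by linarith [ht.2], by linarith [ht.1]⟩
  have h := (convexOn_one_add_rpow_add_one_sub_rpow_sub hp1 hp2).2 ht hneg
    one_half_pos.le one_half_pos.le (add_halves 1)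
  norm_num [← sub_eq_add_neg] at h
  linarith

lemma sq_rpow_half (a : ℝ) : (a ^ 2) ^ (p / 2) = |a| ^ p := by
  rw [← sq_abs, ← rpow_natCast, ← rpow_mul (abs_nonneg a)]
  norm_num [mul_div_cancel₀]

lemma two_point_inequality_of_abs_le (hp1 : 1 ≤ p) (hp2 : p ≤ 2) {a b : ℝ} (hba : |b| ≤ |a|) :
    (a ^ 2 + (p - 1) * b ^ 2) ^ (p / 2) ≤ (|a + b| ^ p + |a - b| ^ p) / 2 := by
  rcases eq_or_ne a 0 with rfl | ha
  · obtain rfl : b = 0 := abs_nonpos_iff.mp (by simpa using hba)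
    simp [zero_rpow (by positivity : p / 2 ≠ 0), zero_rpow (by positivity : p ≠ 0)]
  set t := b / a
  have ht : t ∈ Icc (-1) 1 :=
    abs_le.mp (by rw [abs_div]; exact div_le_one_of_le₀ hba (abs_nonneg a))
  have hb : b = a * t := (mul_div_cancel₀ b ha).symm
  have hbern : (1 + (p - 1) * t ^ 2) ^ (p / 2) ≤ 1 + p / 2 * ((p - 1) * t ^ 2) :=
    rpow_one_add_le_one_add_mul_self (by nlinarith) (by linarith) (by linarith)
  have hmain := two_add_le_one_add_rpow_add_one_sub_rpow hp1 hp2 ht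
  calc (a ^ 2 + (p - 1) * b ^ 2) ^ (p / 2) = |a| ^ p * (1 + (p - 1) * t ^ 2) ^ (p / 2) := by
        rw [← sq_rpow_half, ← mul_rpow (sq_nonneg a) (by nlinarith), hb]; ring_nf
    _ ≤ |a| ^ p * (((1 + t) ^ p + (1 - t) ^ p) / 2) := by gcongr; nlinarith
    _ = (|a + b| ^ p + |a - b| ^ p) / 2 := by
        have h1 : 0 ≤ 1 + t := by linarith [ht.1]
        have h2 : 0 ≤ 1 - t := by linarith [ht.2]
        rw [hb, ← mul_one_add, ← mul_one_sub, abs_mul, abs_mul, abs_of_nonneg h1, abs_of_nonneg h2,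
          mul_rpow (abs_nonneg a) h1, mul_rpow (abs_nonneg a) h2]
        ring

lemma two_point_inequality (hp1 : 1 ≤ p) (hp2 : p ≤ 2) (a b : ℝ) :
    (a ^ 2 + (p - 1) * b ^ 2) ^ (p / 2) ≤ (|a + b| ^ p + |a - b| ^ p) / 2 := by
  rcases le_total |b| |a| with hba | hab
  · exact two_point_inequality_of_abs_le hp1 hp2 hba
  calc (a ^ 2 + (p - 1) * b ^ 2) ^ (p / 2) ≤ (b ^ 2 + (p - 1) * a ^ 2) ^ (p / 2) := by
        refine rpow_le_rpow (by nlinarith) ?_ (by linarith)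
        nlinarith [sq_le_sq.mpr hab]
    _ ≤ (|b + a| ^ p + |b - a| ^ p) / 2 := two_point_inequality_of_abs_le hp1 hp2 hab
    _ = (|a + b| ^ p + |a - b| ^ p) / 2 := by rw [add_comm b, abs_sub_comm]

end TwoPoint

section MidpointConvex

variable {g : ℝ → ℝ}

lemma dyadic_le_of_midpoint (hm : ∀ s t, g ((s + t) / 2) ≤ (g s + g t) / 2) (x y : ℝ) (n : ℕ) :
    ∀ k : ℕ, k ≤ 2 ^ n → g (k / 2 ^ n * x + (1 - k / 2 ^ n) * y) ≤
      k / 2 ^ n * g x + (1 - k / 2 ^ n) * g y := by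
  induction n with
  | zero =>
    intro k hk
    interval_cases k <;> norm_num
  | succ n ih =>
    intro k hk
    -- with `k = i + j` and `i, j ≤ 2 ^ n`, the point is the midpoint of two level-`n` points
    obtain ⟨i, j, rfl, hi, hj⟩ : ∃ i j, k = i + j ∧ i ≤ 2 ^ n ∧ j ≤ 2 ^ n :=
      ⟨k / 2, k - k / 2, by omega, by rw [pow_succ] at hk; omega, by rw [pow_succ] at hk; omega⟩
    have hsplit : ((i + j : ℕ) : ℝ) / 2 ^ (n + 1) = (i / 2 ^ n + j / 2 ^ n) / 2 := by
      push_cast; ring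
    have hi' := ih i hi
    have hj' := ih j hj
    rw [hsplit]
    set u : ℝ := i / 2 ^ n
    set v : ℝ := j / 2 ^ n
    calc g ((u + v) / 2 * x + (1 - (u + v) / 2) * y)
        = g ((u * x + (1 - u) * y + (v * x + (1 - v) * y)) / 2) := by ring_nf
      _ ≤ (g (u * x + (1 - u) * y) + g (v * x + (1 - v) * y)) / 2 := hm _ _
      _ ≤ (u * g x + (1 - u) * g y + (v * g x + (1 - v) * g y)) / 2 := by linarith
      _ = _ := by ring

lemma convexOn_univ_of_midpoint (hc : Continuous g)
    (hm : ∀ s t, g ((s + t) / 2) ≤ (g s + g t) / 2) : ConvexOn ℝ univ g := by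
  refine ⟨convex_univ, fun x _ y _ a b ha hb hab => ?_⟩
  obtain rfl : b = 1 - a := by linarith
  simp only [smul_eq_mul]
  have hclosed : IsClosed {s : ℝ | g (s * x + (1 - s) * y) ≤ s * g x + (1 - s) * g y} :=
    isClosed_le (by fun_prop) (by fun_prop)
  have htendsto : Tendsto (fun n : ℕ => (⌊a * 2 ^ n⌋₊ : ℝ) / 2 ^ n) atTop (𝓝 a) :=
    (tendsto_nat_floor_mul_div_atTop ha).comp (tendsto_pow_atTop_atTop_of_one_lt one_lt_two)
  refine hclosed.mem_of_tendsto htendsto (Eventually.of_forall fun n => ?_)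
  refine dyadic_le_of_midpoint hm x y n _ (Nat.floor_le_of_le ?_)
  exact_mod_cast mul_le_of_le_one_left (by positivity) (by linarith)

end MidpointConvex

section Minkowski

open Finset

variable {ι : Type*} (s : Finset ι) {r : ℝ} {f g : ι → ℝ}

lemma add_rpow_le_sum_add_rpow (hr0 : 0 < r) (hr1 : r ≤ 1) (hf : ∀ i ∈ s, 0 ≤ f i)
    (hg : ∀ i ∈ s, 0 ≤ g i) {U V : ℝ} (hU : 0 < U) (hV : 0 < V) (hUr : U ^ r = ∑ i ∈ s, f i ^ r)
    (hVr : V ^ r = ∑ i ∈ s, g i ^ r) : (U + V) ^ r ≤ ∑ i ∈ s, (f i + g i) ^ r := by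
  have hUV : 0 < U + V := add_pos hU hV
  -- concavity of `x ↦ x ^ r`, applied at `f i / λ` and `g i / (1 - λ)` with `λ = U / (U + V)`
  have pointwise : ∀ i ∈ s, U / (U + V) * ((U + V) / U * f i) ^ r +
      V / (U + V) * ((U + V) / V * g i) ^ r ≤ (f i + g i) ^ r := fun i hi => by
    have h := (concaveOn_rpow hr0.le hr1).2 (x := (U + V) / U * f i) (y := (U + V) / V * g i)
      (mul_nonneg (by positivity) (hf i hi)) (mul_nonneg (by positivity) (hg i hi))
      (by positivity : 0 ≤ U / (U + V)) (by positivity : 0 ≤ V / (U + V)) (by field_simp)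
    have harg : U / (U + V) * ((U + V) / U * f i) + V / (U + V) * ((U + V) / V * g i) =
        f i + g i := by
      field_simp
    simpa only [smul_eq_mul, harg] using h
  have hsplit : ∀ i ∈ s, U / (U + V) * ((U + V) / U * f i) ^ r +
      V / (U + V) * ((U + V) / V * g i) ^ r =
        U / (U + V) * ((U + V) / U) ^ r * f i ^ r + V / (U + V) * ((U + V) / V) ^ r * g i ^ r :=
    fun i hi => by rw [mul_rpow (by positivity) (hf i hi), mul_rpow (by positivity) (hg i hi)]; ring
  have hUr' : 0 < U ^ r := rpow_pos_of_pos hU r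
  have hVr' : 0 < V ^ r := rpow_pos_of_pos hV r
  calc (U + V) ^ r
      = ∑ i ∈ s, (U / (U + V) * ((U + V) / U * f i) ^ r +
          V / (U + V) * ((U + V) / V * g i) ^ r) := by
        rw [sum_congr rfl hsplit, sum_add_distrib, ← mul_sum, ← mul_sum, ← hUr, ← hVr,
          div_rpow hUV.le hU.le, div_rpow hUV.le hV.le]
        field_simp
    _ ≤ ∑ i ∈ s, (f i + g i) ^ r := sum_le_sum pointwise

lemma Lp_add_ge_of_le_one (hr0 : 0 < r) (hr1 : r ≤ 1) (hf : ∀ i ∈ s, 0 ≤ f i)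
    (hg : ∀ i ∈ s, 0 ≤ g i) :
    (∑ i ∈ s, f i ^ r) ^ (1 / r) + (∑ i ∈ s, g i ^ r) ^ (1 / r) ≤
      (∑ i ∈ s, (f i + g i) ^ r) ^ (1 / r) := by
  set U := (∑ i ∈ s, f i ^ r) ^ (1 / r)
  set V := (∑ i ∈ s, g i ^ r) ^ (1 / r)
  have hsf : 0 ≤ ∑ i ∈ s, f i ^ r := sum_nonneg fun i hi => rpow_nonneg (hf i hi) r
  have hsg : 0 ≤ ∑ i ∈ s, g i ^ r := sum_nonneg fun i hi => rpow_nonneg (hg i hi) r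
  have mono : ∀ {h : ι → ℝ}, (∀ i ∈ s, 0 ≤ h i) → (∀ i ∈ s, h i ≤ f i + g i) →
      (∑ i ∈ s, h i ^ r) ^ (1 / r) ≤ (∑ i ∈ s, (f i + g i) ^ r) ^ (1 / r) := fun hh hle => by
    gcongr with i hi
    · exact sum_nonneg fun i hi => rpow_nonneg (hh i hi) r
    · exact hh i hi
    · exact hle i hi
  rcases (show 0 ≤ U from rpow_nonneg hsf _).eq_or_lt with hU | hU
  · rw [← hU, zero_add]
    exact mono hg fun i hi => le_add_of_nonneg_left (hf i hi)
  rcases (show 0 ≤ V from rpow_nonneg hsg _).eq_or_lt with hV | hV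
  · rw [← hV, add_zero]
    exact mono hf fun i hi => le_add_of_nonneg_right (hg i hi)
  have hUr : U ^ r = ∑ i ∈ s, f i ^ r := by
    rw [← rpow_mul hsf, one_div_mul_cancel hr0.ne', rpow_one]
  have hVr : V ^ r = ∑ i ∈ s, g i ^ r := by
    rw [← rpow_mul hsg, one_div_mul_cancel hr0.ne', rpow_one]
  calc U + V = ((U + V) ^ r) ^ (1 / r) := by
        rw [← rpow_mul (add_pos hU hV).le, mul_one_div_cancel hr0.ne', rpow_one]
    _ ≤ (∑ i ∈ s, (f i + g i) ^ r) ^ (1 / r) := by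
        gcongr
        exact add_rpow_le_sum_add_rpow s hr0 hr1 hf hg hU hV hUr hVr

end Minkowski

section LpNorm

open Finset

variable {d : ℕ} {p : ℝ}

lemma continuous_lpnorm (hp : 0 ≤ p) : Continuous (lpnorm d p) := by
  refine Continuous.rpow_const ?_ fun _ => Or.inr (by positivity)
  refine continuous_finsetSum _ fun i _ => Continuous.rpow_const ?_ fun _ => Or.inr hp
  fun_prop

lemma lpnorm_smul (hp : p ≠ 0) (c : ℝ) (z : Euc d) : lpnorm d p (c • z) = |c| * lpnorm d p z := by
  simp only [lpnorm, PiLp.smul_apply, smul_eq_mul, abs_mul,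
    mul_rpow (abs_nonneg c) (abs_nonneg _), ← mul_sum]
  rw [mul_rpow (by positivity) (sum_nonneg fun i _ => by positivity), ← rpow_mul (abs_nonneg c),
    mul_one_div_cancel hp, rpow_one]

lemma lpnorm_sq (hp : 0 < p) (z : Euc d) : lpnorm d p z ^ 2 = (∑ i, |z i| ^ p) ^ (1 / (p / 2)) := by
  rw [lpnorm, ← rpow_natCast, ← rpow_mul (sum_nonneg fun i _ => by positivity)]
  congr 1
  field_simp
  norm_num

lemma sum_mul_sq_rpow_eq_mul_lpnorm_sq (hp : 0 < p) {c : ℝ} (hc : 0 ≤ c) (z : Euc d) :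
    (∑ i, (c * z i ^ 2) ^ (p / 2)) ^ (1 / (p / 2)) = c * lpnorm d p z ^ 2 := by
  simp only [mul_rpow hc (sq_nonneg _), sq_rpow_half, ← mul_sum]
  rw [mul_rpow (by positivity) (sum_nonneg fun i _ => by positivity), ← rpow_mul hc,
    mul_one_div_cancel (by positivity), rpow_one, lpnorm_sq hp]

lemma lpnorm_midpoint_sq_add_le (hp1 : 1 ≤ p) (hp2 : p ≤ 2) (a b : Euc d) :
    lpnorm d p ((1 / 2 : ℝ) • (a + b)) ^ 2 + (p - 1) * lpnorm d p ((1 / 2 : ℝ) • (a - b)) ^ 2 ≤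
      (lpnorm d p a ^ 2 + lpnorm d p b ^ 2) / 2 := by
  have hp : 0 < p := by linarith
  set m : Euc d := (1 / 2 : ℝ) • (a + b)
  set e : Euc d := (1 / 2 : ℝ) • (a - b)
  have hSa : 0 ≤ ∑ i, |a i| ^ p := sum_nonneg fun i _ => by positivity
  have hSb : 0 ≤ ∑ i, |b i| ^ p := sum_nonneg fun i _ => by positivity
  calc lpnorm d p m ^ 2 + (p - 1) * lpnorm d p e ^ 2
      = (∑ i, (1 * m i ^ 2) ^ (p / 2)) ^ (1 / (p / 2)) +
          (∑ i, ((p - 1) * e i ^ 2) ^ (p / 2)) ^ (1 / (p / 2)) := by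
        rw [sum_mul_sq_rpow_eq_mul_lpnorm_sq hp zero_le_one,
          sum_mul_sq_rpow_eq_mul_lpnorm_sq hp (by linarith), one_mul]
    _ ≤ (∑ i, (1 * m i ^ 2 + (p - 1) * e i ^ 2) ^ (p / 2)) ^ (1 / (p / 2)) :=
        Lp_add_ge_of_le_one _ (by positivity) (by linarith) (fun i _ => by positivity)
          (fun i _ => mul_nonneg (by linarith) (sq_nonneg _))
    _ ≤ ((∑ i, |a i| ^ p + ∑ i, |b i| ^ p) / 2) ^ (1 / (p / 2)) := by
        gcongr
        rw [← sum_add_distrib, sum_div]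
        refine sum_le_sum fun i _ => ?_
        have hadd : m i + e i = a i := by simp [m, e]; ring
        have hsub : m i - e i = b i := by simp [m, e]; ring
        simpa only [one_mul, hadd, hsub] using two_point_inequality hp1 hp2 (m i) (e i)
    _ ≤ ((∑ i, |a i| ^ p) ^ (1 / (p / 2)) + (∑ i, |b i| ^ p) ^ (1 / (p / 2))) / 2 := by
        have hq : 1 ≤ 1 / (p / 2) := by rw [le_div_iff₀ (by positivity)]; linarith
        have h := (convexOn_rpow hq).2 (mem_Ici.mpr hSa) (mem_Ici.mpr hSb) one_half_pos.le
          one_half_pos.le (add_halves 1)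
        rw [smul_eq_mul, smul_eq_mul, smul_eq_mul, smul_eq_mul] at h
        rw [add_div, div_eq_inv_mul, div_eq_inv_mul, ← one_div]
        linarith
    _ = (lpnorm d p a ^ 2 + lpnorm d p b ^ 2) / 2 := by rw [lpnorm_sq hp, lpnorm_sq hp]

lemma lpnorm_sq_smul_add_smul_le (hp1 : 1 ≤ p) (hp2 : p ≤ 2) (x y : Euc d) {t : ℝ}
    (ht : t ∈ Icc (0 : ℝ) 1) :
    lpnorm d p (t • x + (1 - t) • y) ^ 2 ≤
      t * lpnorm d p x ^ 2 + (1 - t) * lpnorm d p y ^ 2 -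
        (p - 1) * (t * (1 - t)) * lpnorm d p (x - y) ^ 2 := by
  have hp : 0 < p := by linarith
  set K := lpnorm d p (x - y) ^ 2
  -- `lpnorm_midpoint_sq_add_le` says exactly that `g` is midpoint convex
  let g : ℝ → ℝ := fun s => lpnorm d p (y + s • (x - y)) ^ 2 - (p - 1) * K * s ^ 2
  have hcont : Continuous g := by
    have hN := continuous_lpnorm (d := d) hp.le
    fun_prop
  have hmid : ∀ s u, g ((s + u) / 2) ≤ (g s + g u) / 2 := fun s u => by
    have h := lpnorm_midpoint_sq_add_le hp1 hp2 (y + s • (x - y)) (y + u • (x - y))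
    have hadd : (1 / 2 : ℝ) • (y + s • (x - y) + (y + u • (x - y))) =
        y + ((s + u) / 2) • (x - y) := by
      module
    have hsub : (1 / 2 : ℝ) • (y + s • (x - y) - (y + u • (x - y))) =
        ((s - u) / 2) • (x - y) := by
      module
    rw [hadd, hsub, lpnorm_smul hp.ne', mul_pow, sq_abs] at h
    simp only [g]
    linear_combination h
  have h := (convexOn_univ_of_midpoint hcont hmid).2 (mem_univ 1) (mem_univ 0) ht.1
    (sub_nonneg.2 ht.2) (by ring)
  have hx : y + (1 : ℝ) • (x - y) = x := by module
  have hy : y + (0 : ℝ) • (x - y) = y := by module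
  have hxy : y + t • (x - y) = t • x + (1 - t) • y := by module
  simp only [g, smul_eq_mul, mul_one, mul_zero, add_zero, hx, hy, hxy] at h
  linear_combination h

end LpNorm

theorem lp_strongly_convex_regularizer {d : ℕ} (p : ℝ) (hp1 : 1 < p) (hp2 : p ≤ 2) :
    ∀ x y : Euc d, ∀ t ∈ Icc (0 : ℝ) 1,
      lpnorm d p (t • x + (1 - t) • y) ^ 2 / (2 * (p - 1)) ≤
        t * (lpnorm d p x ^ 2 / (2 * (p - 1))) + (1 - t) * (lpnorm d p y ^ 2 / (2 * (p - 1))) -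
          t * (1 - t) / 2 * lpnorm d p (x - y) ^ 2 := by
  intro x y t ht
  have hp : 0 < p - 1 := by linarith
  have h := lpnorm_sq_smul_add_smul_le hp1.le hp2 x y ht
  calc lpnorm d p (t • x + (1 - t) • y) ^ 2 / (2 * (p - 1))
      ≤ (t * lpnorm d p x ^ 2 + (1 - t) * lpnorm d p y ^ 2 -
          (p - 1) * (t * (1 - t)) * lpnorm d p (x - y) ^ 2) / (2 * (p - 1)) := by gcongr
    _ = _ := by field_simp
end
end

section
/- Let δ ∈ (0, 1/2), let ε > 0, and let t ∈ ℝ satisfy |t| ≤ √(2·log(1/(2δ)) + 2ε) − √(2·log(1/(2δ))). Then for every Borel set S ⊆ ℝ, N(t, 1)(S) − e^ε·N(0, 1)(S) ≤ δ, where N(m, 1) denotes the Gaussian measure on ℝ with mean m and variance 1. -/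
open MeasureTheory Set

noncomputable section

/-!
On the complement of the event `A = {x | ε < t x - t² / 2}` where the privacy loss of `N(t, 1)`
against `N(0, 1)` exceeds `ε`, the density of `N(t, 1)` is at most `e^ε` times that of `N(0, 1)`,
so `N(t, 1)(S) - e^ε N(0, 1)(S) ≤ N(t, 1)(A)`. For `t ≠ 0` the event `A` is the half-line beyond
`m = ε / t + t / 2`, and comparing `N(t, 1)` with `N(m, 1)` there gives the Chernoff-type bound
`N(t, 1)(A) ≤ exp (-(m - t)² / 2) / 2`. The hypothesis on `|t|` says exactly that
`|m - t| ≥ √(2 log (1 / (2δ)))`, so the bound is at most `δ`.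
-/

open ProbabilityTheory Real
open scoped ENNReal NNReal

lemma measure_le_add_mul_of_forall_subset_compl {α : Type*} [MeasurableSpace α]
    {μ ν : Measure α} (A : Set α) {c : ℝ≥0∞} (h : ∀ s ⊆ Aᶜ, μ s ≤ c * ν s) (s : Set α) :
    μ s ≤ μ A + c * ν s :=
  calc μ s ≤ μ (s ∩ A) + μ (s \ A) := measure_le_inter_add_sdiff μ s A
    _ ≤ μ A + c * ν s :=
      add_le_add (measure_mono inter_subset_right)
        ((h _ fun _ hx ↦ hx.2).trans (mul_le_mul_right (measure_mono sdiff_subset) c))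

section Gaussian

variable {v : ℝ≥0}

lemma gaussianPDFReal_one_eq_exp_mul (μ m x : ℝ) :
    gaussianPDFReal μ 1 x = exp ((μ - m) * x - (μ ^ 2 - m ^ 2) / 2) * gaussianPDFReal m 1 x := by
  simp only [gaussianPDFReal, NNReal.coe_one, mul_one]
  rw [mul_left_comm, ← exp_add]
  congr 2
  ring

lemma gaussianReal_le_ofReal_mul_of_forall_pdf_le {μ m c : ℝ} (hv : v ≠ 0) {s : Set ℝ}
    (h : ∀ x ∈ s, gaussianPDFReal μ v x ≤ c * gaussianPDFReal m v x) :
    gaussianReal μ v s ≤ ENNReal.ofReal c * gaussianReal m v s := by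
  rw [gaussianReal_apply _ hv, gaussianReal_apply _ hv, ← lintegral_const_mul _ (by fun_prop)]
  refine setLIntegral_mono (by fun_prop) fun x hx ↦ ?_
  rw [gaussianPDF, gaussianPDF, ← ENNReal.ofReal_mul' (gaussianPDFReal_nonneg _ _ _)]
  exact ENNReal.ofReal_le_ofReal (h x hx)

lemma gaussianReal_Iio_self_eq_Ioi_self (m : ℝ) :
    gaussianReal m v (Iio m) = gaussianReal m v (Ioi m) := by
  have hsymm := gaussianReal_map_const_sub (μ := m) (v := v) (2 * m)
  rw [show 2 * m - m = m by ring] at hsymm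
  conv_lhs => rw [← hsymm]
  rw [Measure.map_apply (by fun_prop) measurableSet_Iio]
  congr 1
  ext x
  simp only [mem_preimage, mem_Iio, mem_Ioi]
  constructor <;> intro <;> linarith

lemma gaussianReal_Ioi_self (m : ℝ) (hv : v ≠ 0) : gaussianReal m v (Ioi m) = 2⁻¹ := by
  have := nullSingletonClass_gaussianReal (μ := m) hv
  have hcompl : gaussianReal m v (Iic m) + gaussianReal m v (Ioi m) = 1 := by
    rw [← compl_Iic, measure_add_measure_compl measurableSet_Iic, measure_univ]
  rw [← measure_congr Iio_ae_eq_Iic, gaussianReal_Iio_self_eq_Ioi_self, ← two_mul] at hcompl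
  exact ENNReal.eq_inv_of_mul_eq_one_left (by rwa [mul_comm])

lemma gaussianReal_Iio_self (m : ℝ) (hv : v ≠ 0) : gaussianReal m v (Iio m) = 2⁻¹ := by
  rw [gaussianReal_Iio_self_eq_Ioi_self, gaussianReal_Ioi_self m hv]

lemma gaussianReal_setOf_mul_lt_mul_le (μ m : ℝ) (hv : v ≠ 0) :
    gaussianReal m v {x | μ * m < μ * x} ≤ 2⁻¹ := by
  rcases lt_trichotomy μ 0 with hμ | rfl | hμ
  · have hset : {x | μ * m < μ * x} = Iio m := by ext; simp [mul_lt_mul_left_of_neg hμ]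
    rw [hset, gaussianReal_Iio_self m hv]
  · simp
  · have hset : {x | μ * m < μ * x} = Ioi m := by ext; simp [mul_lt_mul_iff_right₀ hμ]
    rw [hset, gaussianReal_Ioi_self m hv]

/-- A half-line not containing the mean `μ` of `N(μ, 1)` has mass at most `exp (-d² / 2) / 2`,
where `d` is the distance from `μ` to its endpoint `m`. -/
lemma gaussianReal_one_setOf_mul_lt_mul_le (μ m : ℝ) (h : 0 ≤ μ * (m - μ)) :
    gaussianReal μ 1 {x | μ * m < μ * x} ≤ ENNReal.ofReal (exp (-(m - μ) ^ 2 / 2) / 2) := by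
  have hpdf : ∀ x ∈ {x | μ * m < μ * x},
      gaussianPDFReal μ 1 x ≤ exp (-(m - μ) ^ 2 / 2) * gaussianPDFReal m 1 x := by
    intro x hx
    rw [gaussianPDFReal_one_eq_exp_mul μ m x]
    refine mul_le_mul_of_nonneg_right (exp_le_exp.2 ?_) (gaussianPDFReal_nonneg _ _ _)
    have hpos : 0 < μ * (x - m) := by simp only [mem_ofPred_eq] at hx; linarith
    have hμ : μ ≠ 0 := by rintro rfl; simp at hpos
    have hsign : 0 ≤ (m - μ) * (x - m) :=
      nonneg_of_mul_nonneg_right (a := μ ^ 2) (by convert mul_nonneg h hpos.le using 1; ring)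
        (by positivity)
    linear_combination hsign
  calc gaussianReal μ 1 {x | μ * m < μ * x}
      ≤ ENNReal.ofReal (exp (-(m - μ) ^ 2 / 2)) * gaussianReal m 1 {x | μ * m < μ * x} :=
        gaussianReal_le_ofReal_mul_of_forall_pdf_le one_ne_zero hpdf
    _ ≤ ENNReal.ofReal (exp (-(m - μ) ^ 2 / 2) / 2) := by
        rw [ENNReal.ofReal_div_of_pos two_pos, ENNReal.ofReal_ofNat,
          div_eq_mul_inv (ENNReal.ofReal _)]
        gcongr
        exact gaussianReal_setOf_mul_lt_mul_le μ m one_ne_zero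

lemma gaussianReal_one_le_exp_mul_gaussianReal_zero_of_subset {t ε : ℝ} {s : Set ℝ}
    (hs : s ⊆ {x | ε < t * x - t ^ 2 / 2}ᶜ) :
    gaussianReal t 1 s ≤ ENNReal.ofReal (exp ε) * gaussianReal 0 1 s := by
  refine gaussianReal_le_ofReal_mul_of_forall_pdf_le one_ne_zero fun x hx ↦ ?_
  rw [gaussianPDFReal_one_eq_exp_mul t 0 x]
  refine mul_le_mul_of_nonneg_right (exp_le_exp.2 ?_) (gaussianPDFReal_nonneg _ _ _)
  simpa using hs hx

lemma gaussianReal_privacyLoss_gt_le {t ε r : ℝ} (hr : 0 ≤ r) (h : |t| * r ≤ ε - t ^ 2 / 2) :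
    gaussianReal t 1 {x | ε < t * x - t ^ 2 / 2} ≤ ENNReal.ofReal (exp (-r ^ 2 / 2) / 2) := by
  rcases eq_or_ne t 0 with rfl | ht
  · have hε : 0 ≤ ε := by simpa using h
    simp [hε.not_gt]
  set m := ε / t + t / 2 with hm_def
  have hm : t * (m - t) = ε - t ^ 2 / 2 := by rw [hm_def]; field_simp; ring
  have hset : {x | ε < t * x - t ^ 2 / 2} = {x | t * m < t * x} := by
    ext x; simp only [mem_ofPred_eq]; constructor <;> intro <;> linarith
  have hdist : r ^ 2 ≤ (m - t) ^ 2 := by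
    have : (|t| * r) ^ 2 ≤ (t * (m - t)) ^ 2 := by
      rw [hm]; exact pow_le_pow_left₀ (by positivity) h 2
    rw [mul_pow, mul_pow, sq_abs] at this
    exact le_of_mul_le_mul_left this (by positivity)
  rw [hset]
  refine (gaussianReal_one_setOf_mul_lt_mul_le t m (by nlinarith [abs_nonneg t])).trans ?_
  gcongr

end Gaussian

lemma abs_mul_le_of_abs_le_sqrt_sub {r ε t : ℝ} (hr : 0 ≤ r) (hε : 0 ≤ ε)
    (ht : |t| ≤ √(r ^ 2 + 2 * ε) - r) : |t| * r ≤ ε - t ^ 2 / 2 := by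
  have hsq : (|t| + r) ^ 2 ≤ r ^ 2 + 2 * ε := by
    calc (|t| + r) ^ 2 ≤ √(r ^ 2 + 2 * ε) ^ 2 :=
          pow_le_pow_left₀ (by positivity) (by linarith) 2
      _ = r ^ 2 + 2 * ε := sq_sqrt (by positivity)
  nlinarith [sq_abs t]

theorem gaussian_privacy_curve (δ ε t : ℝ) (hδ : δ ∈ Ioo (0 : ℝ) (1/2)) (hε : 0 < ε)
    (ht : |t| ≤ Real.sqrt (2 * Real.log (1 / (2 * δ)) + 2 * ε) -
      Real.sqrt (2 * Real.log (1 / (2 * δ)))) :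
    ∀ S : Set ℝ, MeasurableSet S →
      ((ProbabilityTheory.gaussianReal t 1) S).toReal -
        Real.exp ε * ((ProbabilityTheory.gaussianReal 0 1) S).toReal ≤ δ := by
  intro S _
  obtain ⟨hδ0, hδ1⟩ := hδ
  set L := log (1 / (2 * δ))
  have hL : 0 ≤ L := log_nonneg (by rw [le_div_iff₀ (by positivity)]; linarith)
  set r := √(2 * L)
  have hr2 : r ^ 2 = 2 * L := sq_sqrt (by positivity)
  have hloss : |t| * r ≤ ε - t ^ 2 / 2 :=
    abs_mul_le_of_abs_le_sqrt_sub (sqrt_nonneg _) hε.le (by rwa [hr2])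
  have htail : gaussianReal t 1 {x | ε < t * x - t ^ 2 / 2} ≤ ENNReal.ofReal δ := by
    have hexp : exp (-r ^ 2 / 2) = 2 * δ := by
      rw [hr2, show -(2 * L) / 2 = -L by ring, exp_neg, exp_log (by positivity)]
      field_simp
    refine (gaussianReal_privacyLoss_gt_le (sqrt_nonneg _) hloss).trans_eq ?_
    rw [hexp, mul_div_cancel_left₀ δ two_ne_zero]
  have hS : gaussianReal t 1 S ≤ ENNReal.ofReal (δ + exp ε * (gaussianReal 0 1 S).toReal) := by
    rw [ENNReal.ofReal_add hδ0.le (by positivity), ENNReal.ofReal_mul (exp_nonneg _),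
      ENNReal.ofReal_toReal (measure_ne_top _ _)]
    exact (measure_le_add_mul_of_forall_subset_compl _
      (fun _ ↦ gaussianReal_one_le_exp_mul_gaussianReal_zero_of_subset) S).trans
      (add_le_add_left htail _)
  linarith [ENNReal.toReal_le_of_le_ofReal (by positivity) hS]
end
end

section
/- Let 𝒳 ⊂ ℝ^d be a nonempty compact convex set with nonempty interior, let F : 𝒳 → ℝ be continuous and convex, and let k > 0. Let ν be the probability measure proportional to exp(−kF) on 𝒳. Then ∫_𝒳 F dν ≤ min_{x∈𝒳} F(x) + d/k. -/
/-!
Write `G = k F` and fix any `x₀ ∈ 𝒳`. The homothety `y ↦ t y + (1 - t) x₀`, `0 < t ≤ 1`, maps `𝒳`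
into itself with Jacobian `tᵈ`, and by convexity `G (t y + (1 - t) x₀) ≤ t G y + (1 - t) G x₀`; so
`tᵈ ∫ exp (-(t G + (1 - t) G x₀)) ≤ Z := ∫ exp (-G)`. The tangent-line bound `eᵘ ≥ 1 + u` bounds the
integral on the left below by `Z + (1 - t) (∫ G exp (-G) - G x₀ Z)`. Letting `t → 1`, where `tᵈ`
has derivative `d`, gives `∫ G exp (-G) ≤ (G x₀ + d) Z`, i.e. `∫ G dν ≤ G x₀ + d`.
-/

open MeasureTheory Set

noncomputable section

/-- The probability measure proportional to `exp (-F)` on `s`. -/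
def gibbs {d : ℕ} (s : Set (Euc d)) (F : Euc d → ℝ) : Measure (Euc d) :=
  (volume.restrict s).withDensity
    (fun x => ENNReal.ofReal (Real.exp (-F x) / ∫ y in s, Real.exp (-F y)))

lemma le_natCast_mul_of_forall_pow_mul_le {n : ℕ} {I Z : ℝ}
    (h : ∀ t ∈ Ioo (0 : ℝ) 1, t ^ n * (Z + (1 - t) * I) ≤ Z) : I ≤ n * Z := by
  have hlt : ∀ t ∈ Ioo (0 : ℝ) 1, t ^ n * I ≤ (∑ i ∈ Finset.range n, t ^ i) * Z := by
    rintro t ⟨ht₀, ht₁⟩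
    have : (1 - t) * (t ^ n * I) ≤ (1 - t) * ((∑ i ∈ Finset.range n, t ^ i) * Z) := by
      linear_combination h t ⟨ht₀, ht₁⟩ - Z * geom_sum_mul_neg t n
    exact le_of_mul_le_mul_left this (sub_pos.2 ht₁)
  have h1 : (1 : ℝ) ∈ closure (Ioo 0 1) := by simp [closure_Ioo zero_ne_one]
  simpa using le_on_closure hlt (by fun_prop) (by fun_prop) h1

lemma exp_neg_mul_one_add_le (a c t : ℝ) :
    Real.exp (-a) * (1 + (1 - t) * (a - c)) ≤ Real.exp (-(t * a + (1 - t) * c)) :=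
  calc Real.exp (-a) * (1 + (1 - t) * (a - c))
      ≤ Real.exp (-a) * Real.exp ((1 - t) * (a - c)) := by
        gcongr
        linarith [Real.add_one_le_exp ((1 - t) * (a - c))]
    _ = Real.exp (-(t * a + (1 - t) * c)) := by rw [← Real.exp_add]; ring_nf

section AddHaar

variable {E : Type*} [NormedAddCommGroup E] [NormedSpace ℝ E] [FiniteDimensional ℝ E]
  [MeasurableSpace E] [BorelSpace E] (μ : Measure E) [μ.IsAddHaarMeasure]
  {s : Set E} {G : E → ℝ}

lemma pow_finrank_mul_setIntegral_exp_le (hs : IsCompact s) (hG : ConvexOn ℝ s G)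
    (hGc : ContinuousOn G s) {x₀ : E} (hx₀ : x₀ ∈ s) {t : ℝ} (ht₀ : 0 < t) (ht₁ : t ≤ 1) :
    t ^ Module.finrank ℝ E * ∫ y in s, Real.exp (-(t * G y + (1 - t) * G x₀)) ∂μ ≤
      ∫ y in s, Real.exp (-G y) ∂μ := by
  set T : E → E := fun y => t • y + (1 - t) • x₀
  have hTs : MapsTo T s s := fun y hy => hG.1 hy hx₀ ht₀.le (by linarith) (by ring)
  have hT' : ∀ y ∈ s, HasFDerivWithinAt T (t • ContinuousLinearMap.id ℝ E) s y := fun y _ =>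
    (((hasFDerivAt_id y).const_smul t).add_const _).hasFDerivWithinAt
  have hTinj : InjOn T s := fun a _ b _ hab =>
    smul_right_injective E ht₀.ne' (add_right_cancel hab)
  have hdet : |(t • ContinuousLinearMap.id ℝ E).det| = t ^ Module.finrank ℝ E := by
    simp [ContinuousLinearMap.det, LinearMap.det_smul, abs_of_pos ht₀]
  have hexp_int : ∀ {f : E → ℝ}, ContinuousOn f s → IntegrableOn (fun y => Real.exp (-f y)) s μ :=
    fun hf => (Real.continuous_exp.comp_continuousOn hf.neg).integrableOn_compact hs
  calc t ^ Module.finrank ℝ E * ∫ y in s, Real.exp (-(t * G y + (1 - t) * G x₀)) ∂μ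
      ≤ t ^ Module.finrank ℝ E * ∫ y in s, Real.exp (-G (T y)) ∂μ := by
        refine mul_le_mul_of_nonneg_left (setIntegral_mono_on
          (hexp_int (f := fun y => t * G y + (1 - t) * G x₀) (by fun_prop))
          (hexp_int (f := fun y => G (T y)) (hGc.comp (by fun_prop) hTs))
          hs.measurableSet fun y hy => ?_) (by positivity)
        gcongr
        simpa using hG.2 hy hx₀ ht₀.le (by linarith) (by ring)
    _ = ∫ y in T '' s, Real.exp (-G y) ∂μ := by
        rw [integral_image_eq_integral_abs_det_fderiv_smul μ hs.measurableSet hT' hTinj, hdet,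
          integral_smul, smul_eq_mul]
    _ ≤ ∫ y in s, Real.exp (-G y) ∂μ :=
        setIntegral_mono_set (hexp_int hGc) (.of_forall fun _ => (Real.exp_pos _).le)
          hTs.image_subset.eventuallyLE

lemma setIntegral_mul_exp_neg_le (hs : IsCompact s) (hG : ConvexOn ℝ s G)
    (hGc : ContinuousOn G s) {x₀ : E} (hx₀ : x₀ ∈ s) :
    ∫ y in s, G y * Real.exp (-G y) ∂μ ≤
      (G x₀ + Module.finrank ℝ E) * ∫ y in s, Real.exp (-G y) ∂μ := by
  set Z := ∫ y in s, Real.exp (-G y) ∂μ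
  set J := ∫ y in s, G y * Real.exp (-G y) ∂μ
  have hexp : ContinuousOn (fun y => Real.exp (-G y)) s := by fun_prop
  have hZ : IntegrableOn (fun y => Real.exp (-G y)) s μ := hexp.integrableOn_compact hs
  have hJ : IntegrableOn (fun y => G y * Real.exp (-G y)) s μ :=
    (hGc.mul hexp).integrableOn_compact hs
  suffices J - G x₀ * Z ≤ Module.finrank ℝ E * Z by linarith
  refine le_natCast_mul_of_forall_pow_mul_le fun t ⟨ht₀, ht₁⟩ => ?_
  have hsplit : Z + (1 - t) * (J - G x₀ * Z) =
      ∫ y in s, Real.exp (-G y) * (1 + (1 - t) * (G y - G x₀)) ∂μ := by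
    have : ∀ y, Real.exp (-G y) * (1 + (1 - t) * (G y - G x₀)) =
        (1 - (1 - t) * G x₀) * Real.exp (-G y) + (1 - t) * (G y * Real.exp (-G y)) :=
      fun y => by ring
    simp only [this]
    rw [integral_add (hZ.const_mul _) (hJ.const_mul _), integral_const_mul, integral_const_mul]
    ring
  calc t ^ Module.finrank ℝ E * (Z + (1 - t) * (J - G x₀ * Z))
      ≤ t ^ Module.finrank ℝ E * ∫ y in s, Real.exp (-(t * G y + (1 - t) * G x₀)) ∂μ := by
        rw [hsplit]
        refine mul_le_mul_of_nonneg_left (setIntegral_mono_on ?_ ?_ hs.measurableSet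
          fun y _ => exp_neg_mul_one_add_le _ _ _) (by positivity)
        · exact (hexp.mul (by fun_prop)).integrableOn_compact hs
        · exact ContinuousOn.integrableOn_compact hs (by fun_prop)
    _ ≤ Z := pow_finrank_mul_setIntegral_exp_le μ hs hG hGc hx₀ ht₀ ht₁.le

end AddHaar

lemma setIntegral_exp_neg_pos {α : Type*} [TopologicalSpace α] [T2Space α] [MeasurableSpace α]
    [OpensMeasurableSpace α] {μ : Measure α} [μ.IsOpenPosMeasure] [IsFiniteMeasureOnCompacts μ]
    {s : Set α} {H : α → ℝ} (hs : IsCompact s) (hint : (interior s).Nonempty)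
    (hH : ContinuousOn H s) :
    0 < ∫ x in s, Real.exp (-H x) ∂μ := by
  have : NeZero (μ.restrict s) := ⟨by
    rw [Ne, Measure.restrict_eq_zero]
    exact ((isOpen_interior.measure_pos μ hint).trans_le (measure_mono interior_subset)).ne'⟩
  exact integral_exp_pos ((Real.continuous_exp.comp_continuousOn hH.neg).integrableOn_compact hs)

lemma integral_gibbs {d : ℕ} {s : Set (Euc d)} {H : Euc d → ℝ}
    (hH : AEMeasurable H (volume.restrict s)) (f : Euc d → ℝ) :
    ∫ x, f x ∂gibbs s H =
      (∫ x in s, f x * Real.exp (-H x)) / ∫ x in s, Real.exp (-H x) := by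
  have hZ : 0 ≤ ∫ x in s, Real.exp (-H x) :=
    setIntegral_nonneg_of_ae (.of_forall fun _ => (Real.exp_pos _).le)
  rw [gibbs, integral_withDensity_eq_integral_toReal_smul₀ (by fun_prop)
    (.of_forall fun _ => ENNReal.ofReal_lt_top), ← integral_div]
  refine integral_congr_ae (.of_forall fun x => ?_)
  simp only [smul_eq_mul, ENNReal.toReal_ofReal (div_nonneg (Real.exp_pos _).le hZ)]
  ring

lemma integral_gibbs_le {d : ℕ} {s : Set (Euc d)} {G : Euc d → ℝ} (hs : IsCompact s)
    (hint : (interior s).Nonempty) (hG : ConvexOn ℝ s G) (hGc : ContinuousOn G s)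
    {x₀ : Euc d} (hx₀ : x₀ ∈ s) :
    ∫ x, G x ∂gibbs s G ≤ G x₀ + d := by
  rw [integral_gibbs (hGc.aemeasurable hs.measurableSet),
    div_le_iff₀ (setIntegral_exp_neg_pos hs hint hGc)]
  simpa using setIntegral_mul_exp_neg_le volume hs hG hGc hx₀

theorem gibbs_risk_bound_general {d : ℕ} (𝒳 : Set (Euc d))
    (hcomp : IsCompact 𝒳) (hconv : Convex ℝ 𝒳) (hint : (interior 𝒳).Nonempty)
    (F : Euc d → ℝ) (hFc : ContinuousOn F 𝒳)
    (hFconv : ∀ x ∈ 𝒳, ∀ y ∈ 𝒳, ∀ t ∈ Icc (0 : ℝ) 1,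
      F (t • x + (1 - t) • y) ≤ t * F x + (1 - t) * F y)
    (k : ℝ) (hk : 0 < k) :
    ∫ x, F x ∂(gibbs 𝒳 (fun x => k * F x)) ≤ sInf (F '' 𝒳) + d / k := by
  have hF : ConvexOn ℝ 𝒳 F := ⟨hconv, fun x hx y hy a b ha _ hab => by
    obtain rfl : b = 1 - a := by linarith
    simpa using hFconv x hx y hy a ⟨ha, by linarith⟩⟩
  rw [← sub_le_iff_le_add]
  refine le_csInf ((hint.mono interior_subset).image F) ?_
  rintro _ ⟨x₀, hx₀, rfl⟩
  have h := integral_gibbs_le (G := fun x => k * F x) hcomp hint (hF.smul hk.le)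
    (hFc.const_smul k) hx₀
  rw [integral_const_mul] at h
  rw [sub_le_iff_le_add', ← sub_le_iff_le_add, le_div_iff₀ hk]
  linarith

theorem gibbs_risk_bound {d : ℕ} (𝒳 : Set (Euc d)) (hne : 𝒳.Nonempty)
    (hcomp : IsCompact 𝒳) (hconv : Convex ℝ 𝒳) (hint : (interior 𝒳).Nonempty)
    (F : Euc d → ℝ) (hFc : ContinuousOn F 𝒳)
    (hFconv : ∀ x ∈ 𝒳, ∀ y ∈ 𝒳, ∀ t ∈ Icc (0 : ℝ) 1,
      F (t • x + (1 - t) • y) ≤ t * F x + (1 - t) * F y)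
    (k : ℝ) (hk : 0 < k) :
    ∫ x, F x ∂(gibbs 𝒳 (fun x => k * F x)) ≤ sInf (F '' 𝒳) + d / k :=
  gibbs_risk_bound_general 𝒳 hcomp hconv hint F hFc hFconv k hk
end
end
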